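/- Let U : X → ℝ with ∫_X e^{-U(x)} dx = 1, σ > 0, and let G, G' : X → ℝ be measurable with |G(x)|, |G'(x)| ≤ C for all x. Define Z = ∫ exp(-(2/σ²)G - U) dx, Z' = ∫ exp(-(2/σ²)G' - U) dx, Ψ(x) = Z^{-1} exp(-(2/σ²)G(x) - U(x)), Ψ'(x) = (Z')^{-1} exp(-(2/σ²)G'(x) - U(x)). If ‖G - G'‖_∞ ≤ ε, then for all x, |Ψ(x) - Ψ'(x)| ≤ L e^{-U(x)} ε, where L = (2/σ²) exp(4C/σ²)(1 + exp(4C/σ²)). -/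

import Mathlib

/-!
Write `w = e^{-U}` and `f = -(2/σ²) G`, so the Gibbs density is `e^{f} w / Z_f` with
`Z_f = ∫ e^{f} w`. Since `|f| ≤ M := 2C/σ²` and `∫ w = 1`, the normalizer is at least
`e^{-M}`, and `e^{f}` is `e^{M}`-Lipschitz in `f` on `f ≤ M`. Splitting
`a/Z - a'/Z' = (a - a')/Z + a' (Z' - Z)/(Z Z')` bounds the two terms by `e^{2M} δ w` and
`e^{4M} δ w`, where `δ = (2/σ²) ε` bounds `|f - f'|`.
-/

open MeasureTheory Real

theorem Real.abs_exp_sub_exp_le_of_le {a b M : ℝ} (ha : a ≤ M) (hb : b ≤ M) :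
    |exp a - exp b| ≤ exp M * |a - b| := by
  wlog hba : b ≤ a generalizing a b
  · rw [abs_sub_comm, abs_sub_comm a b]
    exact this hb ha (le_of_not_ge hba)
  rw [abs_of_nonneg (sub_nonneg.2 (exp_le_exp.2 hba)), abs_of_nonneg (sub_nonneg.2 hba)]
  calc exp a - exp b = exp a * (1 - exp (b - a)) := by
        rw [mul_sub, mul_one, ← exp_add, add_sub_cancel]
    _ ≤ exp M * (a - b) :=
        mul_le_mul (exp_le_exp.2 ha) (by linarith [add_one_le_exp (b - a)])
          (sub_nonneg.2 (exp_le_one_iff.2 (sub_nonpos.2 hba))) (exp_pos M).le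

theorem Real.abs_exp_mul_sub_exp_mul_le {a b c M δ : ℝ} (hc : 0 ≤ c) (ha : a ≤ M) (hb : b ≤ M)
    (hab : |a - b| ≤ δ) : |exp a * c - exp b * c| ≤ exp M * δ * c := by
  rw [← sub_mul, abs_mul, abs_of_nonneg hc]
  exact mul_le_mul_of_nonneg_right ((abs_exp_sub_exp_le_of_le ha hb).trans
    (mul_le_mul_of_nonneg_left hab (exp_pos M).le)) hc

noncomputable def gibbsDensity {X : Type*} [MeasurableSpace X] (μ : Measure X) (w f : X → ℝ)
    (x : X) : ℝ :=
  (∫ z, exp (f z) * w z ∂μ)⁻¹ * (exp (f x) * w x)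

section GibbsDensity

variable {X : Type*} [MeasurableSpace X] {μ : Measure X} {w f f' : X → ℝ} {M δ : ℝ}

theorem integrable_exp_mul (hw : Integrable w μ) (hf : AEStronglyMeasurable f μ)
    (hfM : ∀ x, f x ≤ M) : Integrable (fun x => exp (f x) * w x) μ :=
  hw.bdd_mul (continuous_exp.comp_aestronglyMeasurable hf) <| ae_of_all _ fun x => by
    rw [norm_of_nonneg (exp_pos _).le]
    exact exp_le_exp.2 (hfM x)

theorem exp_neg_le_integral_exp_mul (hw : Integrable w μ) (hw0 : 0 ≤ w)
    (hw1 : ∫ x, w x ∂μ = 1) (hf : AEStronglyMeasurable f μ) (hfM : ∀ x, |f x| ≤ M) :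
    exp (-M) ≤ ∫ x, exp (f x) * w x ∂μ :=
  calc exp (-M) = ∫ x, exp (-M) * w x ∂μ := by rw [integral_const_mul, hw1, mul_one]
    _ ≤ ∫ x, exp (f x) * w x ∂μ :=
        integral_mono (hw.const_mul _)
          (integrable_exp_mul hw hf fun x => (le_abs_self _).trans (hfM x)) fun x =>
          mul_le_mul_of_nonneg_right (exp_le_exp.2 (neg_le_of_abs_le (hfM x))) (hw0 x)

theorem abs_integral_exp_mul_sub_le (hw : Integrable w μ) (hw0 : 0 ≤ w)
    (hw1 : ∫ x, w x ∂μ = 1) (hf : AEStronglyMeasurable f μ) (hf' : AEStronglyMeasurable f' μ)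
    (hfM : ∀ x, f x ≤ M) (hf'M : ∀ x, f' x ≤ M) (hδ : ∀ x, |f x - f' x| ≤ δ) :
    |∫ x, exp (f x) * w x ∂μ - ∫ x, exp (f' x) * w x ∂μ| ≤ exp M * δ := by
  rw [← integral_sub (integrable_exp_mul hw hf hfM) (integrable_exp_mul hw hf' hf'M)]
  calc |∫ x, (exp (f x) * w x - exp (f' x) * w x) ∂μ|
      ≤ ∫ x, |exp (f x) * w x - exp (f' x) * w x| ∂μ := abs_integral_le_integral_abs
    _ ≤ ∫ x, exp M * δ * w x ∂μ :=
        integral_mono_of_nonneg (ae_of_all _ fun _ => abs_nonneg _) (hw.const_mul _)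
          (ae_of_all _ fun x => abs_exp_mul_sub_exp_mul_le (hw0 x) (hfM x) (hf'M x) (hδ x))
    _ = exp M * δ := by rw [integral_const_mul, hw1, mul_one]

theorem inv_integral_exp_mul_le (hw : Integrable w μ) (hw0 : 0 ≤ w) (hw1 : ∫ x, w x ∂μ = 1)
    (hf : AEStronglyMeasurable f μ) (hfM : ∀ x, |f x| ≤ M) :
    (∫ x, exp (f x) * w x ∂μ)⁻¹ ≤ exp M := by
  rw [← inv_inv (exp M), ← exp_neg]
  exact inv_anti₀ (exp_pos _) (exp_neg_le_integral_exp_mul hw hw0 hw1 hf hfM)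

theorem abs_gibbsDensity_sub_le (hw : Integrable w μ) (hw0 : 0 ≤ w) (hw1 : ∫ x, w x ∂μ = 1)
    (hf : AEStronglyMeasurable f μ) (hf' : AEStronglyMeasurable f' μ)
    (hfM : ∀ x, |f x| ≤ M) (hf'M : ∀ x, |f' x| ≤ M) (hδ : ∀ x, |f x - f' x| ≤ δ) (x : X) :
    |gibbsDensity μ w f x - gibbsDensity μ w f' x|
      ≤ exp (2 * M) * (1 + exp (2 * M)) * δ * w x := by
  have hfM' : ∀ x, f x ≤ M := fun x => (le_abs_self _).trans (hfM x)
  have hf'M' : ∀ x, f' x ≤ M := fun x => (le_abs_self _).trans (hf'M x)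
  set Z := ∫ x, exp (f x) * w x ∂μ
  set Z' := ∫ x, exp (f' x) * w x ∂μ
  set a := exp (f x) * w x
  set a' := exp (f' x) * w x
  have hZ : 0 < Z := (exp_pos _).trans_le (exp_neg_le_integral_exp_mul hw hw0 hw1 hf hfM)
  have hZ' : 0 < Z' := (exp_pos _).trans_le (exp_neg_le_integral_exp_mul hw hw0 hw1 hf' hf'M)
  have hZinv : Z⁻¹ ≤ exp M := inv_integral_exp_mul_le hw hw0 hw1 hf hfM
  have hZ'inv : Z'⁻¹ ≤ exp M := inv_integral_exp_mul_le hw hw0 hw1 hf' hf'M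
  have ha : |a - a'| ≤ exp M * δ * w x :=
    abs_exp_mul_sub_exp_mul_le (hw0 x) (hfM' x) (hf'M' x) (hδ x)
  have ha'0 : 0 ≤ a' := mul_nonneg (exp_pos _).le (hw0 x)
  have ha' : a' ≤ exp M * w x := mul_le_mul_of_nonneg_right (exp_le_exp.2 (hf'M' x)) (hw0 x)
  have hZZ' : |Z' - Z| ≤ exp M * δ := by
    rw [abs_sub_comm]; exact abs_integral_exp_mul_sub_le hw hw0 hw1 hf hf' hfM' hf'M' hδ
  have hsplit : Z⁻¹ * a - Z'⁻¹ * a' = Z⁻¹ * (a - a') + Z⁻¹ * Z'⁻¹ * (Z' - Z) * a' := by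
    field_simp; ring
  have hexp2 : exp (2 * M) = exp M ^ 2 := by rw [← exp_nat_mul]; norm_num
  calc |Z⁻¹ * a - Z'⁻¹ * a'|
      ≤ Z⁻¹ * |a - a'| + Z⁻¹ * Z'⁻¹ * |Z' - Z| * a' := by
        rw [hsplit]
        refine (abs_add_le _ _).trans_eq ?_
        simp only [abs_mul, abs_of_pos (inv_pos.2 hZ), abs_of_pos (inv_pos.2 hZ'),
          abs_of_nonneg ha'0]
    _ ≤ exp M * (exp M * δ * w x) + exp M * exp M * (exp M * δ) * (exp M * w x) := by
        have hδ0 : 0 ≤ δ := (abs_nonneg _).trans (hδ x)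
        gcongr
    _ = exp (2 * M) * (1 + exp (2 * M)) * δ * w x := by rw [hexp2]; ring

end GibbsDensity

theorem gibbs_density_lipschitz_general
    {X : Type*} [MeasurableSpace X] (μ : Measure X)
    (U G G' : X → ℝ) (hG : Measurable G) (hG' : Measurable G')
    (hUint : Integrable (fun x => exp (-U x)) μ)
    (hUprob : ∫ x, exp (-U x) ∂μ = 1)
    (C σ ε : ℝ)
    (hGbdd : ∀ x, |G x| ≤ C) (hG'bdd : ∀ x, |G' x| ≤ C)
    (hclose : ∀ x, |G x - G' x| ≤ ε) :
    ∀ x, |(∫ z, exp (-(2 / σ ^ 2) * G z - U z) ∂μ)⁻¹ * exp (-(2 / σ ^ 2) * G x - U x)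
          - (∫ z, exp (-(2 / σ ^ 2) * G' z - U z) ∂μ)⁻¹ * exp (-(2 / σ ^ 2) * G' x - U x)|
        ≤ (2 / σ ^ 2) * exp (4 * C / σ ^ 2) * (1 + exp (4 * C / σ ^ 2))
            * exp (-U x) * ε := by
  intro x
  set β := 2 / σ ^ 2 with hβ
  have hβ0 : 0 ≤ β := by positivity
  have hsplit : ∀ H : X → ℝ, ∀ z, exp (-β * H z - U z) = exp (-β * H z) * exp (-U z) :=
    fun _ _ => by rw [sub_eq_add_neg, exp_add]
  have hbdd : ∀ H : X → ℝ, (∀ z, |H z| ≤ C) → ∀ z, |-β * H z| ≤ β * C := fun H hH z => by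
    rw [abs_mul, abs_neg, abs_of_nonneg hβ0]; exact mul_le_mul_of_nonneg_left (hH z) hβ0
  have hδ : ∀ z, |-β * G z - -β * G' z| ≤ β * ε := fun z => by
    rw [← mul_sub, abs_mul, abs_neg, abs_of_nonneg hβ0]
    exact mul_le_mul_of_nonneg_left (hclose z) hβ0
  have hM : 2 * (β * C) = 4 * C / σ ^ 2 := by rw [hβ]; ring
  have key := abs_gibbsDensity_sub_le hUint (fun z => (exp_pos _).le) hUprob
    (hG.const_mul (-β)).aestronglyMeasurable (hG'.const_mul (-β)).aestronglyMeasurable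
    (hbdd G hGbdd) (hbdd G' hG'bdd) hδ x
  simp only [gibbsDensity, hM] at key
  simp only [hsplit]
  convert key using 1
  ring

/-- Pointwise Lipschitz continuity of the Gibbs density with respect to
uniform perturbations of the potential, with explicit constant. -/
theorem gibbs_density_lipschitz
    {X : Type*} [MeasurableSpace X] (μ : Measure X)
    (U G G' : X → ℝ) (hU : Measurable U) (hG : Measurable G) (hG' : Measurable G')
    (hUint : Integrable (fun x => exp (-U x)) μ)
    (hUprob : ∫ x, exp (-U x) ∂μ = 1)
    (C σ ε : ℝ) (hC : 0 < C) (hσ : 0 < σ) (hε : 0 ≤ ε)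
    (hGbdd : ∀ x, |G x| ≤ C) (hG'bdd : ∀ x, |G' x| ≤ C)
    (hclose : ∀ x, |G x - G' x| ≤ ε) :
    ∀ x, |(∫ z, exp (-(2 / σ ^ 2) * G z - U z) ∂μ)⁻¹ * exp (-(2 / σ ^ 2) * G x - U x)
          - (∫ z, exp (-(2 / σ ^ 2) * G' z - U z) ∂μ)⁻¹ * exp (-(2 / σ ^ 2) * G' x - U x)|
        ≤ (2 / σ ^ 2) * exp (4 * C / σ ^ 2) * (1 + exp (4 * C / σ ^ 2))
            * exp (-U x) * ε :=
  gibbs_density_lipschitz_general μ U G G' hG hG' hUint hUprob C σ ε hGbdd hG'bdd hclose
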